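/- arXiv:1905.05707 — 5 statements merged into one kernel-verified Lean document; each statement's English description precedes it below -/
import Mathlib

section
/- Let m, n be positive naturals and let à : Fin m → Fin n → ℝ be the associated game matrix of positive LP data. If q : Fin n → ℝ is a mixed strategy (q j ≥ 0 for all j and ∑_j q j = 1), V > 0 is a real number, and ∑_j à i j * q j ≤ V for every i, then the vector y defined by y j = q j / (c j * V) satisfies y j ≥ 0 for all j, ∑_j A i j * y j ≤ a₀ i for every i, and ∑_j c j * y j = 1 / V. -/
theorem stmt_0 (m n : ℕ) (hm : 0 < m) (hn : 0 < n)
    (A : Fin m → Fin n → ℝ) (c : Fin n → ℝ) (a₀ : Fin m → ℝ)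
    (hA : ∀ i j, 0 < A i j) (hc : ∀ j, 0 < c j) (ha₀ : ∀ i, 0 < a₀ i)
    (Atilde : Fin m → Fin n → ℝ) (hAtilde : ∀ i j, Atilde i j = A i j / (a₀ i * c j))
    (q : Fin n → ℝ) (hq0 : ∀ j, 0 ≤ q j) (hq1 : ∑ j, q j = 1)
    (V : ℝ) (hV : 0 < V) (hqV : ∀ i, ∑ j, Atilde i j * q j ≤ V)
    (y : Fin n → ℝ) (hy : ∀ j, y j = q j / (c j * V)) :
    (∀ j, 0 ≤ y j) ∧ (∀ i, ∑ j, A i j * y j ≤ a₀ i) ∧ (∑ j, c j * y j = 1 / V) := by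
  refine ⟨fun j => ?_, fun i => ?_, ?_⟩
  · rw [hy]
    have := hc j
    exact div_nonneg (hq0 j) (by positivity)
  · have h := hqV i
    have ha := ha₀ i
    have key : ∑ j, A i j * y j = (a₀ i / V) * ∑ j, Atilde i j * q j := by
      rw [Finset.mul_sum]
      refine Finset.sum_congr rfl fun j _ => ?_
      have := hc j
      rw [hy, hAtilde]
      field_simp
    rw [key]
    calc (a₀ i / V) * ∑ j, Atilde i j * q j ≤ (a₀ i / V) * V :=
          mul_le_mul_of_nonneg_left h (by positivity)
      _ = a₀ i := by field_simp
  · have : ∑ j, c j * y j = ∑ j, q j / V := by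
      refine Finset.sum_congr rfl fun j _ => ?_
      have := (hc j).ne'
      rw [hy]
      field_simp
    rw [this, ← Finset.sum_div, hq1]
end

section
/- Let m, n be positive naturals and let à : Fin m → Fin n → ℝ be the associated game matrix of positive LP data. If p : Fin m → ℝ is a mixed strategy (p i ≥ 0 for all i and ∑_i p i = 1), V > 0 is a real number, and ∑_i à i j * p i ≥ V for every j, then the vector x defined by x i = p i / (a₀ i * V) satisfies x i ≥ 0 for all i, ∑_i A i j * x i ≥ c j for every j, and ∑_i a₀ i * x i = 1 / V. -/
theorem stmt_1 (m n : ℕ) (hm : 0 < m) (hn : 0 < n)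
    (A : Fin m → Fin n → ℝ) (c : Fin n → ℝ) (a₀ : Fin m → ℝ)
    (hA : ∀ i j, 0 < A i j) (hc : ∀ j, 0 < c j) (ha₀ : ∀ i, 0 < a₀ i)
    (Atilde : Fin m → Fin n → ℝ) (hAtilde : ∀ i j, Atilde i j = A i j / (a₀ i * c j))
    (p : Fin m → ℝ) (hp0 : ∀ i, 0 ≤ p i) (hp1 : ∑ i, p i = 1)
    (V : ℝ) (hV : 0 < V) (hpV : ∀ j, V ≤ ∑ i, Atilde i j * p i)
    (x : Fin m → ℝ) (hx : ∀ i, x i = p i / (a₀ i * V)) :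
    (∀ i, 0 ≤ x i) ∧ (∀ j, c j ≤ ∑ i, A i j * x i) ∧ (∑ i, a₀ i * x i = 1 / V) := by
  refine ⟨fun i => ?_, fun j => ?_, ?_⟩
  · rw [hx]
    exact div_nonneg (hp0 i) (mul_nonneg (ha₀ i).le hV.le)
  · have key : ∑ i, A i j * x i = (c j / V) * ∑ i, Atilde i j * p i := by
      rw [Finset.mul_sum]
      refine Finset.sum_congr rfl fun i _ => ?_
      rw [hx, hAtilde]
      field_simp [(ha₀ i).ne', hV.ne', (hc j).ne']
    rw [key]
    calc c j = (c j / V) * V := by field_simp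
    _ ≤ (c j / V) * ∑ i, Atilde i j * p i :=
        mul_le_mul_of_nonneg_left (hpV j) (div_nonneg (hc j).le hV.le)
  · have : ∑ i, a₀ i * x i = ∑ i, p i / V := by
      refine Finset.sum_congr rfl fun i _ => ?_
      rw [hx]
      field_simp [(ha₀ i).ne', hV.ne']
    rw [this, ← Finset.sum_div, hp1]
end

section
/- Let m, n be positive naturals and let à : Fin m → Fin n → ℝ be the associated game matrix of positive LP data. Suppose (p, q, V) is a solution of the antagonistic matrix game for Ã, with V > 0. Then the vector y defined by y j = q j / (c j * V) is an optimal solution of the primal LP: it is feasible (y j ≥ 0 and ∑_j A i j * y j ≤ a₀ i for all i), and for every feasible y' (y' j ≥ 0 and ∑_j A i j * y' j ≤ a₀ i for all i) one has ∑_j c j * y' j ≤ ∑_j c j * y j = 1 / V. -/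
theorem stmt_2 (m n : ℕ) (hm : 0 < m) (hn : 0 < n)
    (A : Fin m → Fin n → ℝ) (c : Fin n → ℝ) (a₀ : Fin m → ℝ)
    (hA : ∀ i j, 0 < A i j) (hc : ∀ j, 0 < c j) (ha₀ : ∀ i, 0 < a₀ i)
    (Atilde : Fin m → Fin n → ℝ) (hAtilde : ∀ i j, Atilde i j = A i j / (a₀ i * c j))
    (p : Fin m → ℝ) (q : Fin n → ℝ) (V : ℝ)
    (hp0 : ∀ i, 0 ≤ p i) (hp1 : ∑ i, p i = 1)
    (hq0 : ∀ j, 0 ≤ q j) (hq1 : ∑ j, q j = 1)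
    (hpV : ∀ j, V ≤ ∑ i, Atilde i j * p i) (hqV : ∀ i, ∑ j, Atilde i j * q j ≤ V)
    (hV : 0 < V)
    (y : Fin n → ℝ) (hy : ∀ j, y j = q j / (c j * V)) :
    (∀ j, 0 ≤ y j) ∧ (∀ i, ∑ j, A i j * y j ≤ a₀ i) ∧
    (∀ y' : Fin n → ℝ, (∀ j, 0 ≤ y' j) → (∀ i, ∑ j, A i j * y' j ≤ a₀ i) →
      ∑ j, c j * y' j ≤ ∑ j, c j * y j) ∧
    (∑ j, c j * y j = 1 / V) := by
  have hval : ∑ j, c j * y j = 1 / V := by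
    have : ∀ j, c j * y j = q j / V := by
      intro j
      rw [hy j]
      have h1 := (hc j).ne'
      have h2 := hV.ne'
      field_simp
    simp_rw [this, ← Finset.sum_div, hq1]
  have hy0 : ∀ j, 0 ≤ y j := by
    intro j
    rw [hy j]
    exact div_nonneg (hq0 j) (mul_nonneg (hc j).le hV.le)
  refine ⟨hy0, ?_, ?_, hval⟩
  · intro i
    have key : ∑ j, A i j * y j = (a₀ i / V) * ∑ j, Atilde i j * q j := by
      rw [Finset.mul_sum]
      apply Finset.sum_congr rfl
      intro j _
      rw [hy j, hAtilde i j]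
      have h1 := (hc j).ne'
      have h2 := hV.ne'
      have h3 := (ha₀ i).ne'
      field_simp
    rw [key]
    calc (a₀ i / V) * ∑ j, Atilde i j * q j ≤ (a₀ i / V) * V := by
          apply mul_le_mul_of_nonneg_left (hqV i)
          exact div_nonneg (ha₀ i).le hV.le
      _ = a₀ i := by field_simp
  · intro y' hy'0 hy'feas
    rw [hval]
    rw [le_div_iff₀ hV, mul_comm]
    calc V * ∑ j, c j * y' j = ∑ j, V * (c j * y' j) := by rw [Finset.mul_sum]
      _ ≤ ∑ j, (∑ i, Atilde i j * p i) * (c j * y' j) := by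
          apply Finset.sum_le_sum
          intro j _
          exact mul_le_mul_of_nonneg_right (hpV j) (mul_nonneg (hc j).le (hy'0 j))
      _ = ∑ i, p i * ∑ j, Atilde i j * c j * y' j := by
          simp_rw [Finset.sum_mul, Finset.mul_sum]
          rw [Finset.sum_comm]
          exact Finset.sum_congr rfl fun i _ => Finset.sum_congr rfl fun j _ => by ring
      _ = ∑ i, p i * ((∑ j, A i j * y' j) / a₀ i) := by
          apply Finset.sum_congr rfl
          intro i _
          congr 1
          rw [Finset.sum_div]
          apply Finset.sum_congr rfl
          intro j _
          rw [hAtilde i j]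
          have h1 := (hc j).ne'
          have h3 := (ha₀ i).ne'
          field_simp
      _ ≤ ∑ i, p i * 1 := by
          apply Finset.sum_le_sum
          intro i _
          apply mul_le_mul_of_nonneg_left _ (hp0 i)
          rw [div_le_one (ha₀ i)]
          exact hy'feas i
      _ = 1 := by simp [hp1]
end

section
/- Let m, n be positive naturals and let à : Fin m → Fin n → ℝ be the associated game matrix of positive LP data. Suppose (p, q, V) is a solution of the antagonistic matrix game for Ã, with V > 0. Then the vector x defined by x i = p i / (a₀ i * V) is an optimal solution of the dual LP: it is feasible (x i ≥ 0 and ∑_i A i j * x i ≥ c j for all j), and for every feasible x' (x' i ≥ 0 and ∑_i A i j * x' i ≥ c j for all j) one has ∑_i a₀ i * x' i ≥ ∑_i a₀ i * x i = 1 / V. -/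
theorem stmt_3 (m n : ℕ) (hm : 0 < m) (hn : 0 < n)
    (A : Fin m → Fin n → ℝ) (c : Fin n → ℝ) (a₀ : Fin m → ℝ)
    (hA : ∀ i j, 0 < A i j) (hc : ∀ j, 0 < c j) (ha₀ : ∀ i, 0 < a₀ i)
    (Atilde : Fin m → Fin n → ℝ) (hAtilde : ∀ i j, Atilde i j = A i j / (a₀ i * c j))
    (p : Fin m → ℝ) (q : Fin n → ℝ) (V : ℝ)
    (hp0 : ∀ i, 0 ≤ p i) (hp1 : ∑ i, p i = 1)
    (hq0 : ∀ j, 0 ≤ q j) (hq1 : ∑ j, q j = 1)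
    (hpV : ∀ j, V ≤ ∑ i, Atilde i j * p i) (hqV : ∀ i, ∑ j, Atilde i j * q j ≤ V)
    (hV : 0 < V)
    (x : Fin m → ℝ) (hx : ∀ i, x i = p i / (a₀ i * V)) :
    (∀ i, 0 ≤ x i) ∧ (∀ j, c j ≤ ∑ i, A i j * x i) ∧
    (∀ x' : Fin m → ℝ, (∀ i, 0 ≤ x' i) → (∀ j, c j ≤ ∑ i, A i j * x' i) →
      ∑ i, a₀ i * x i ≤ ∑ i, a₀ i * x' i) ∧
    (∑ i, a₀ i * x i = 1 / V) := by
  have hxnn : ∀ i, 0 ≤ x i := by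
    intro i
    rw [hx]
    have := (ha₀ i).le
    have := hp0 i
    positivity
  have hsum : ∑ i, a₀ i * x i = 1 / V := by
    have : ∀ i ∈ Finset.univ, a₀ i * x i = p i / V := by
      intro i _
      rw [hx, mul_div_assoc', mul_div_mul_left _ _ (ha₀ i).ne']
    rw [Finset.sum_congr rfl this, ← Finset.sum_div, hp1]
  refine ⟨hxnn, ?_, ?_, hsum⟩
  · intro j
    have h1 : ∑ i, A i j * x i = (c j / V) * ∑ i, Atilde i j * p i := by
      rw [Finset.mul_sum]
      refine Finset.sum_congr rfl fun i _ => ?_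
      rw [hx, hAtilde]
      have h1 := (ha₀ i).ne'
      have h2 := (hc j).ne'
      have h3 := hV.ne'
      field_simp
    rw [h1]
    calc c j = (c j / V) * V := by field_simp
      _ ≤ (c j / V) * ∑ i, Atilde i j * p i := by
          exact mul_le_mul_of_nonneg_left (hpV j) (div_nonneg (hc j).le hV.le)
  · intro x' hx'0 hx'f
    set D := ∑ j, q j * (∑ i, Atilde i j * (a₀ i * x' i)) with hD
    have h2 : (1 : ℝ) ≤ D := by
      rw [← hq1]
      apply Finset.sum_le_sum
      intro j _
      have hinner : (1 : ℝ) ≤ ∑ i, Atilde i j * (a₀ i * x' i) := by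
        have heq : ∑ i, Atilde i j * (a₀ i * x' i) = (∑ i, A i j * x' i) / c j := by
          rw [Finset.sum_div]
          refine Finset.sum_congr rfl fun i _ => ?_
          rw [hAtilde]
          have h1 := (ha₀ i).ne'
          have h2 := (hc j).ne'
          field_simp
        rw [heq, le_div_iff₀ (hc j), one_mul]
        exact hx'f j
      calc q j = q j * 1 := by ring
        _ ≤ q j * ∑ i, Atilde i j * (a₀ i * x' i) :=
            mul_le_mul_of_nonneg_left hinner (hq0 j)
    have h3 : D = ∑ i, (a₀ i * x' i) * ∑ j, Atilde i j * q j := by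
      rw [hD]
      simp only [Finset.mul_sum]
      rw [Finset.sum_comm]
      refine Finset.sum_congr rfl fun i _ => Finset.sum_congr rfl fun j _ => by ring
    have h4 : D ≤ V * ∑ i, a₀ i * x' i := by
      rw [h3, Finset.mul_sum]
      apply Finset.sum_le_sum
      intro i _
      have hnn : 0 ≤ a₀ i * x' i := mul_nonneg (ha₀ i).le (hx'0 i)
      calc (a₀ i * x' i) * ∑ j, Atilde i j * q j ≤ (a₀ i * x' i) * V :=
            mul_le_mul_of_nonneg_left (hqV i) hnn
        _ = V * (a₀ i * x' i) := by ring
    have h5 : (1 : ℝ) ≤ V * ∑ i, a₀ i * x' i := h2.trans h4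
    rw [hsum, div_le_iff₀ hV]
    linarith [h5]
end

section
/- Let à : Fin m → Fin n → ℝ be a real matrix and let (p, q, V) be a solution of the antagonistic matrix game for Ã. If x : Fin m → ℝ satisfies x i ≥ 0 for all i, ∑_i à i j * x i ≥ 1 for every j, and ∑_i x i > 0, then V ≥ 1 / (∑_i x i). -/
theorem stmt_8 (m n : ℕ) (hm : 0 < m) (hn : 0 < n)
    (Atilde : Fin m → Fin n → ℝ)
    (p : Fin m → ℝ) (q : Fin n → ℝ) (V : ℝ)
    (hp0 : ∀ i, 0 ≤ p i) (hp1 : ∑ i, p i = 1)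
    (hq0 : ∀ j, 0 ≤ q j) (hq1 : ∑ j, q j = 1)
    (hpV : ∀ j, V ≤ ∑ i, Atilde i j * p i) (hqV : ∀ i, ∑ j, Atilde i j * q j ≤ V)
    (x : Fin m → ℝ) (hx0 : ∀ i, 0 ≤ x i) (hx1 : ∀ j, 1 ≤ ∑ i, Atilde i j * x i)
    (hxpos : 0 < ∑ i, x i) :
    1 / (∑ i, x i) ≤ V := by
  have h1 : (1:ℝ) ≤ ∑ j, (∑ i, Atilde i j * x i) * q j := by
    calc (1:ℝ) = ∑ j, q j := hq1.symm
    _ ≤ ∑ j, (∑ i, Atilde i j * x i) * q j := by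
        apply Finset.sum_le_sum
        intro j _
        nth_rewrite 1 [show q j = 1 * q j by ring]
        exact mul_le_mul_of_nonneg_right (hx1 j) (hq0 j)
  have h2 : ∑ j, (∑ i, Atilde i j * x i) * q j ≤ V * ∑ i, x i := by
    have : ∑ j, (∑ i, Atilde i j * x i) * q j
        = ∑ i, x i * ∑ j, Atilde i j * q j := by
      simp only [Finset.sum_mul]
      rw [Finset.sum_comm]
      simp only [Finset.mul_sum]
      congr 1; ext i; congr 1; ext j; ring
    rw [this]
    calc ∑ i, x i * ∑ j, Atilde i j * q j ≤ ∑ i, x i * V := by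
          apply Finset.sum_le_sum
          intro i _
          exact mul_le_mul_of_nonneg_left (hqV i) (hx0 i)
      _ = V * ∑ i, x i := by rw [← Finset.sum_mul, mul_comm]
  rw [div_le_iff₀ hxpos]
  linarith
end
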